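/- arXiv:2002.10229 — 2 statements merged into one kernel-verified Lean document; each statement's English description precedes it below -/
import Mathlib

section
/- Let ~ be the smallest congruence relation on the polynomial semiring ℕ[X] (compatible with addition and multiplication) containing the relation X ~ 2X + 1. Then every polynomial p = a₀Xⁿ + a₁Xⁿ⁻¹ + ⋯ + aₙ with a₀ ≥ 1 and n ≥ 1 is congruent to a polynomial of the form a·Xⁿ with a ∈ ℕ, a ≥ 1, or of the form Xⁿ + b·Xⁿ⁻¹ with b ∈ ℕ. -/
open Polynomial

/-- The generating relation `X ~ 2X + 1` on `ℕ[X]`. -/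
def morphRel (p q : Polynomial ℕ) : Prop := p = X ∧ q = 2 * X + 1

/-!
Everything happens in a commutative semiring with an element `x = 2x + 1`, such as the quotient
of `ℕ[X]` by the congruence. Multiplying the relation by `x^k` shows that `x^(k+1)` absorbs
`x^(k+1) + x^k`; hence for `u ≥ 1` the value of `u x^(k+1) + v x^k` depends only on `u - v`,
which gives the two normal forms. A polynomial is brought to two terms from the top down: its
leading monomial lends one `x^(k+1)` to the remaining terms, these reduce to two terms one level
lower, and a three-term expression `u x^(k+2) + v x^(k+1) + w x^k` with `u ≥ 1` collapses to two
terms by shifting the upper pair by `w + 1` and then absorbing `w x^k` into the lower pair.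
-/

section

variable {R : Type*} [CommSemiring R] {x : R}

theorem pow_succ_absorb (hx : x = 2 * x + 1) (k : ℕ) :
    x ^ (k + 1) + (x ^ (k + 1) + x ^ k) = x ^ (k + 1) := by
  calc x ^ (k + 1) + (x ^ (k + 1) + x ^ k) = (2 * x + 1) * x ^ k := by ring
    _ = x ^ (k + 1) := by rw [← hx, pow_succ']

theorem pow_succ_absorb_natCast_mul (hx : x = 2 * x + 1) (k m : ℕ) :
    x ^ (k + 1) + m * (x ^ (k + 1) + x ^ k) = x ^ (k + 1) := by
  induction m with
  | zero => simp
  | succ m ih =>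
    calc x ^ (k + 1) + (m + 1 : ℕ) * (x ^ (k + 1) + x ^ k)
        = x ^ (k + 1) + m * (x ^ (k + 1) + x ^ k) + (x ^ (k + 1) + x ^ k) := by push_cast; ring
      _ = x ^ (k + 1) := by rw [ih, pow_succ_absorb hx]

theorem add_natCast_mul_pow_succ_add (hx : x = 2 * x + 1) {u : ℕ} (hu : 1 ≤ u) (v m k : ℕ) :
    (u + m : R) * x ^ (k + 1) + (v + m : R) * x ^ k = u * x ^ (k + 1) + v * x ^ k := by
  obtain ⟨u, rfl⟩ := Nat.exists_eq_add_of_le' hu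
  calc ((u + 1 : ℕ) + m : R) * x ^ (k + 1) + (v + m : R) * x ^ k
      = u * x ^ (k + 1) + v * x ^ k + (x ^ (k + 1) + m * (x ^ (k + 1) + x ^ k)) := by
        push_cast; ring
    _ = (u + 1 : ℕ) * x ^ (k + 1) + v * x ^ k := by
        rw [pow_succ_absorb_natCast_mul hx]; push_cast; ring

theorem natCast_mul_pow_succ_add_eq_of_add_eq (hx : x = 2 * x + 1) {u u' v v' : ℕ} (hu : 1 ≤ u)
    (hu' : 1 ≤ u') (h : u + v' = u' + v) (k : ℕ) :
    u * x ^ (k + 1) + v * x ^ k = u' * x ^ (k + 1) + v' * x ^ k := by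
  have hv : (v + u' : R) = v' + u := by
    rw [← Nat.cast_add, ← Nat.cast_add, show v + u' = v' + u by omega]
  rw [← add_natCast_mul_pow_succ_add hx hu v u', ← add_natCast_mul_pow_succ_add hx hu' v' u, hv,
    add_comm (u' : R)]

theorem natCast_mul_pow_succ_add_eq_normalForm (hx : x = 2 * x + 1) {u : ℕ} (hu : 1 ≤ u)
    (v k : ℕ) :
    (∃ a : ℕ, 1 ≤ a ∧ u * x ^ (k + 1) + v * x ^ k = a * x ^ (k + 1)) ∨
    ∃ b : ℕ, u * x ^ (k + 1) + v * x ^ k = x ^ (k + 1) + b * x ^ k := by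
  rcases lt_or_ge v u with h | h
  · refine .inl ⟨u - v, by omega, ?_⟩
    simpa using natCast_mul_pow_succ_add_eq_of_add_eq hx (v' := 0) hu (by omega : 1 ≤ u - v)
      (by omega) k
  · refine .inr ⟨v + 1 - u, ?_⟩
    simpa using natCast_mul_pow_succ_add_eq_of_add_eq hx (u' := 1) hu le_rfl (by omega) k

theorem natCast_mul_pow_add_two_add_add (hx : x = 2 * x + 1) {u : ℕ} (hu : 1 ≤ u) (v w k : ℕ) :
    u * x ^ (k + 2) + v * x ^ (k + 1) + w * x ^ k
      = (u + w + 1 : ℕ) * x ^ (k + 2) + (v + 1 : ℕ) * x ^ (k + 1) := by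
  have top := add_natCast_mul_pow_succ_add hx hu v (w + 1) (k + 1)
  have bottom := add_natCast_mul_pow_succ_add hx (u := v + 1) (by omega) 0 w k
  push_cast at top bottom ⊢
  calc (u : R) * x ^ (k + 2) + v * x ^ (k + 1) + w * x ^ k
      = (u + (w + 1)) * x ^ (k + 2) + ((v + 1 + w) * x ^ (k + 1) + (0 + w) * x ^ k) := by
        rw [← top]; ring
    _ = (u + w + 1) * x ^ (k + 2) + (v + 1) * x ^ (k + 1) := by rw [bottom]; ring

theorem Polynomial.one_le_leadingCoeff {p : ℕ[X]} (hp : p ≠ 0) : 1 ≤ p.leadingCoeff :=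
  Nat.one_le_iff_ne_zero.mpr (leadingCoeff_ne_zero.mpr hp)

theorem exists_aeval_eq_natCast_mul_pow_succ_add (hx : x = 2 * x + 1) {k : ℕ} {p : ℕ[X]}
    (hp : p.natDegree = k + 1) :
    ∃ u v : ℕ, 1 ≤ u ∧ aeval x p = u * x ^ (k + 1) + v * x ^ k := by
  have hlead : 1 ≤ p.leadingCoeff :=
    one_le_leadingCoeff (ne_zero_of_natDegree_gt (n := 0) (by omega))
  induction k generalizing p with
  | zero =>
    refine ⟨p.coeff 1, p.coeff 0, by rwa [leadingCoeff, hp] at hlead, ?_⟩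
    rw [eq_X_add_C_of_natDegree_le_one hp.le]
    simp
  | succ k ih =>
    obtain ⟨s, hs⟩ := Nat.exists_eq_add_of_le' hlead
    set e := p.eraseLead
    have hpe : aeval x p = (s + 1 : ℕ) * x ^ (k + 2) + aeval x e := by
      conv_lhs => rw [← eraseLead_add_C_mul_X_pow p, hp, hs]
      rw [map_add, add_comm]
      simp [e]
    have he : e.natDegree ≤ k + 1 := (eraseLead_natDegree_le p).trans (by omega)
    have hXe : (X ^ (k + 1) + e).natDegree = k + 1 :=
      natDegree_eq_of_le_of_coeff_ne_zero
        ((natDegree_add_le _ _).trans (max_le (natDegree_X_pow_le _) he)) (by simp)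
    obtain ⟨u, v, hu, hq⟩ :=
      ih hXe (one_le_leadingCoeff (ne_zero_of_natDegree_gt (n := 0) (by omega)))
    refine ⟨s + 2 + v + 1, u + 1, by omega, ?_⟩
    rw [← natCast_mul_pow_add_two_add_add hx (u := s + 2) (by omega), hpe]
    calc ((s + 1 : ℕ) : R) * x ^ (k + 2) + aeval x e
        = s * x ^ (k + 2) + (x ^ (k + 2) + (x ^ (k + 2) + x ^ (k + 1))) + aeval x e := by
          rw [pow_succ_absorb hx]; push_cast; ring
      _ = (s + 2 : ℕ) * x ^ (k + 2) + aeval x (X ^ (k + 1) + e) := by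
          rw [map_add, map_pow, aeval_X]; push_cast; ring
      _ = _ := by rw [hq, add_assoc]

theorem aeval_eq_normalForm (hx : x = 2 * x + 1) {k : ℕ} {p : ℕ[X]}
    (hp : p.natDegree = k + 1) :
    (∃ a : ℕ, 1 ≤ a ∧ aeval x p = a * x ^ (k + 1)) ∨
    ∃ b : ℕ, aeval x p = x ^ (k + 1) + b * x ^ k := by
  obtain ⟨u, v, hu, huv⟩ := exists_aeval_eq_natCast_mul_pow_succ_add hx hp
  rw [huv]
  exact natCast_mul_pow_succ_add_eq_normalForm hx hu v k

end

theorem RingCon.coe_eq_aeval (c : RingCon ℕ[X]) (q : ℕ[X]) :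
    (q : c.Quotient) = aeval (c.mk' X) q :=
  RingHom.congr_fun (ringHom_ext (f := c.mk') (g := (aeval (c.mk' X)).toRingHom)
    (fun _ => by simp) (by simp)) q

/-- Morphological Stability: modulo the smallest congruence on `ℕ[X]` containing
`X ~ 2X + 1`, every polynomial of degree `n ≥ 1` is congruent either to `a·Xⁿ`
with `a ≥ 1` or to `Xⁿ + b·Xⁿ⁻¹` with `b ∈ ℕ`. -/
theorem morphological_stability (p : Polynomial ℕ) (hn : 1 ≤ p.natDegree) :
    (∃ a : ℕ, 1 ≤ a ∧ ringConGen morphRel p (C a * X ^ p.natDegree)) ∨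
    (∃ b : ℕ, ringConGen morphRel p (X ^ p.natDegree + C b * X ^ (p.natDegree - 1))) := by
  set c := ringConGen morphRel
  have hx : c.mk' X = 2 * c.mk' X + 1 := by
    have h : c.mk' X = c.mk' (2 * X + 1) := c.eq.mpr (RingConGen.Rel.of _ _ ⟨rfl, rfl⟩)
    rwa [map_add, map_mul, map_ofNat, map_one] at h
  obtain ⟨k, hk⟩ : ∃ k, p.natDegree = k + 1 := ⟨p.natDegree - 1, by omega⟩
  rw [hk, Nat.add_sub_cancel]
  simp only [← c.eq, c.coe_eq_aeval, map_add, map_mul, map_pow, aeval_X, eq_natCast, map_natCast]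
  -- `exact` rather than `simpa`: the two sides reach `Semiring c.Quotient` by different paths
  exact aeval_eq_normalForm (R := c.Quotient) hx hk
end

section
/- Twistor space recursion: define g(p, 1) := X^{2p−1} + 1 for p ≥ 1, and g(p, q) := X^{2(p+q−2)+1} + g(p−1, q−1)·X² + 1 for p ≥ q ≥ 2. Then for all p ≥ q ≥ 1 the identity g(p, q) = (X^{2p−1} + 1)·∑_{j=0}^{q−1} X^{2j} holds in ℤ[X]; i.e., the twistor space satisfies 𝕋^{p,q} = 𝕊^{2p−1}·ℂℙᵠ⁻¹, and in particular 𝕋^{2,2} = 𝕊³·𝕊² = (X³+1)(X²+1). -/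
open Polynomial Finset

/-- The quantity `g(p,q)` of the twistor space `𝕋^{p,q}`:
`g(p,1) = X^{2p−1} + 1` and `g(p,q) = X^{2(p+q−2)+1} + g(p−1,q−1)·X² + 1`. -/
noncomputable def tw : ℕ → ℕ → Polynomial ℤ
  | _, 0 => 1
  | p, 1 => X ^ (2 * p - 1) + 1
  | p, q + 2 => X ^ (2 * (p + q) + 1) + tw (p - 1) (q + 1) * X ^ 2 + 1

lemma tw_main : ∀ q p : ℕ, 1 ≤ q → q ≤ p →
    tw p q = (X ^ (2 * p - 1) + 1) * ∑ j ∈ Finset.range q, X ^ (2 * j) := by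
  intro q
  induction q using Nat.strong_induction_on with
  | _ q ih =>
    match q with
    | 0 => intro p h; omega
    | 1 =>
      intro p _ _
      simp [tw]
    | q + 2 =>
      intro p _ hpq
      obtain ⟨r, rfl⟩ : ∃ r, p = r + 2 := ⟨p - 2, by omega⟩
      have hrec := ih (q + 1) (by omega) (r + 1) (by omega) (by omega)
      show X ^ (2 * (r + 2 + q) + 1) + tw (r + 2 - 1) (q + 1) * X ^ 2 + 1 = _
      have h1 : r + 2 - 1 = r + 1 := rfl
      rw [h1, hrec]
      have e1 : 2 * (r + 1) - 1 = 2 * r + 1 := by omega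
      have e2 : 2 * (r + 2) - 1 = 2 * r + 3 := by omega
      have e3 : 2 * (r + 2 + q) + 1 = (2 * r + 3) + 2 * (q + 1) := by omega
      rw [e1, e2, e3]
      simp only [pow_mul]
      set S : Polynomial ℤ := ∑ j ∈ Finset.range (q + 1), (X ^ 2) ^ j with hS
      have key : (X : Polynomial ℤ) ^ 2 * S + 1 = (X ^ 2) ^ (q + 1) + S := by
        rw [← geom_sum_succ, geom_sum_succ']
      have hsum : ∑ j ∈ Finset.range (q + 2), ((X : Polynomial ℤ) ^ 2) ^ j
          = (X ^ 2) ^ (q + 1) + S := geom_sum_succ' ..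
      rw [hsum, pow_add]
      linear_combination key

/-- Twistor space recursion: for `p ≥ q ≥ 1`,
`g(p,q) = (X^{2p−1}+1)·∑_{j=0}^{q−1} X^{2j}`, i.e. `𝕋^{p,q} = 𝕊^{2p−1}·ℂℙᵠ⁻¹`;
in particular `𝕋^{2,2} = 𝕊³·𝕊² = (X³+1)(X²+1)`. -/
theorem twistor_space (p q : ℕ) (hq : 1 ≤ q) (hpq : q ≤ p) :
    tw p q = (X ^ (2 * p - 1) + 1) * ∑ j ∈ Finset.range q, X ^ (2 * j) ∧
    tw 2 2 = ((X : Polynomial ℤ) ^ 3 + 1) * (X ^ 2 + 1) := by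
  refine ⟨tw_main q p hq hpq, ?_⟩
  rw [tw_main 2 2 (by norm_num) (by norm_num)]
  rw [show 2 * 2 - 1 = 3 from rfl, Finset.sum_range_succ, Finset.sum_range_one]
  ring
end
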